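/- arXiv:2310.05518 — 2 statements merged into one kernel-verified Lean document; each statement's English description precedes it below -/
import Mathlib

section
/- Let A and S be n×n real matrices with A symmetric and S nonsingular, and let σ_n ≤ ... ≤ σ_1 be the singular values of S. For each k there exists θ_k ∈ [σ_n², σ_1²] such that the k-th eigenvalue (in nondecreasing order) of S A Sᵀ equals θ_k times the k-th eigenvalue of A. -/
open Matrix

open scoped Classical in
/-- The eigenvalues of a matrix, sorted in nondecreasing order (junk value `0` if the
matrix is not Hermitian). -/
noncomputable def sortedEigs {n : ℕ} (M : Matrix (Fin n) (Fin n) ℝ) : Fin n → ℝ :=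
  if hM : M.IsHermitian then
    fun k => ((Finset.univ.val.map hM.eigenvalues).sort (· ≤ ·)).getD (k : ℕ) 0
  else 0

open Finset Submodule Module

local notation "⟪" x ", " y "⟫" => @inner ℝ _ _ x y

variable {n : ℕ}

lemma sortedEigs_eq {M : Matrix (Fin n) (Fin n) ℝ} (hM : M.IsHermitian) :
    sortedEigs M = hM.eigenvalues ∘ Tuple.sort hM.eigenvalues := by
  classical
  set f := hM.eigenvalues
  set σ := Tuple.sort f
  have hperm : Finset.univ.val.map (f ∘ ⇑σ) = Finset.univ.val.map f := by
    rw [← Multiset.map_map]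
    congr 1
    calc Multiset.map (⇑σ) Finset.univ.val = (Finset.univ.map σ.toEmbedding).val := by
          rw [Finset.map_val]; rfl
      _ = Finset.univ.val := by rw [Finset.map_univ_equiv]
  have hL : (Finset.univ.val.map f).sort (· ≤ ·) = List.ofFn (f ∘ σ) := by
    have hp : ((Finset.univ.val.map f).sort (· ≤ ·)).Perm (List.ofFn (f ∘ σ)) := by
      rw [← Multiset.coe_eq_coe, Multiset.sort_eq, List.ofFn_eq_map, ← Multiset.map_coe]
      rw [show ((List.finRange n : List (Fin n)) : Multiset (Fin n)) = Finset.univ.val from by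
        simp [Fin.univ_def]]
      rw [hperm]
    exact List.Perm.eq_of_pairwise' (Multiset.pairwise_sort _ _)
      (List.sortedLE_ofFn_iff.2 (Tuple.monotone_sort f)).pairwise hp
  funext k
  simp only [sortedEigs, dif_pos hM]
  rw [hL, List.getD_eq_getElem _ _ (by simp [k.isLt]), List.getElem_ofFn]

lemma sortedEigs_mono {M : Matrix (Fin n) (Fin n) ℝ} (hM : M.IsHermitian) :
    Monotone (sortedEigs M) := by
  rw [sortedEigs_eq hM]; exact Tuple.monotone_sort _

section Spectral

variable {M : Matrix (Fin n) (Fin n) ℝ} (hM : M.IsHermitian)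

lemma toEuclideanLin_apply_eigBasis (j : Fin n) :
    Matrix.toEuclideanLin M (hM.eigenvectorBasis j) =
      hM.eigenvalues j • hM.eigenvectorBasis j := by
  rw [Matrix.toEuclideanLin_apply, hM.mulVec_eigenvectorBasis]
  simp

lemma inner_T (x y : EuclideanSpace ℝ (Fin n)) :
    ⟪x, Matrix.toEuclideanLin M y⟫ =
      ∑ j, hM.eigenvalues j * (hM.eigenvectorBasis.repr x j * hM.eigenvectorBasis.repr y j) := by
  set b := hM.eigenvectorBasis with hb
  conv_lhs => rw [show y = ∑ j, b.repr y j • b j from (b.sum_repr y).symm]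
  rw [map_sum, inner_sum]
  congr 1; funext j
  rw [_root_.map_smul, toEuclideanLin_apply_eigBasis hM j, smul_smul, real_inner_smul_right,
    real_inner_comm (hM.eigenvectorBasis j) x, ← b.repr_apply_apply]
  ring

lemma inner_self_repr (x y : EuclideanSpace ℝ (Fin n)) :
    ⟪x, y⟫ = ∑ j, hM.eigenvectorBasis.repr x j * hM.eigenvectorBasis.repr y j := by
  rw [← LinearIsometryEquiv.inner_map_map hM.eigenvectorBasis.repr x y]
  simp only [PiLp.inner_apply, RCLike.inner_apply, conj_trivial]
  exact Finset.sum_congr rfl (fun _ _ => mul_comm _ _)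

lemma repr_eq_zero_of_mem_span (s : Finset (Fin n)) {x : EuclideanSpace ℝ (Fin n)}
    (hx : x ∈ span ℝ (hM.eigenvectorBasis '' ↑s)) {j : Fin n} (hj : j ∉ s) :
    hM.eigenvectorBasis.repr x j = 0 := by
  induction hx using Submodule.span_induction with
  | mem y hy =>
    obtain ⟨i, his, rfl⟩ := hy
    rw [OrthonormalBasis.repr_apply_apply]
    exact hM.eigenvectorBasis.orthonormal.2 (fun h => hj (h ▸ his))
  | zero => simp
  | add y z _ _ hy hz => simp [hy, hz]
  | smul c y _ hy => simp [hy]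

lemma finrank_span_eigenvectors (s : Finset (Fin n)) :
    finrank ℝ (span ℝ (hM.eigenvectorBasis '' ↑s)) = s.card := by
  have hli : LinearIndependent ℝ (fun i : s => hM.eigenvectorBasis i) :=
    (hM.eigenvectorBasis.orthonormal.linearIndependent).comp _ Subtype.val_injective
  have h := finrank_span_eq_card hli
  have hr : Set.range (fun i : s => hM.eigenvectorBasis i) = hM.eigenvectorBasis '' ↑s := by
    ext v; simp [Set.mem_image]
  rw [hr] at h
  rw [h, Fintype.card_coe]

lemma quad_le_on_span (s : Finset (Fin n)) {c : ℝ} (hc : ∀ j ∈ s, hM.eigenvalues j ≤ c)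
    {x : EuclideanSpace ℝ (Fin n)} (hx : x ∈ span ℝ (hM.eigenvectorBasis '' ↑s)) :
    ⟪x, Matrix.toEuclideanLin M x⟫ ≤ c * ⟪x, x⟫ := by
  rw [inner_T hM x x, inner_self_repr hM x x, Finset.mul_sum]
  apply Finset.sum_le_sum
  intro j _
  by_cases hj : j ∈ s
  · have := mul_le_mul_of_nonneg_right (hc j hj) (mul_self_nonneg (hM.eigenvectorBasis.repr x j))
    linarith
  · rw [repr_eq_zero_of_mem_span hM s hx hj]; simp

lemma le_quad_on_span (s : Finset (Fin n)) {c : ℝ} (hc : ∀ j ∈ s, c ≤ hM.eigenvalues j)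
    {x : EuclideanSpace ℝ (Fin n)} (hx : x ∈ span ℝ (hM.eigenvectorBasis '' ↑s)) :
    c * ⟪x, x⟫ ≤ ⟪x, Matrix.toEuclideanLin M x⟫ := by
  rw [inner_T hM x x, inner_self_repr hM x x, Finset.mul_sum]
  apply Finset.sum_le_sum
  intro j _
  by_cases hj : j ∈ s
  · have := mul_le_mul_of_nonneg_right (hc j hj) (mul_self_nonneg (hM.eigenvectorBasis.repr x j))
    linarith
  · rw [repr_eq_zero_of_mem_span hM s hx hj]; simp

end Spectral

lemma exists_ne_zero_mem_inf {W U : Submodule ℝ (EuclideanSpace ℝ (Fin n))}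
    (h : n < finrank ℝ W + finrank ℝ U) : ∃ x, x ∈ W ⊓ U ∧ x ≠ 0 := by
  have h1 := Submodule.finrank_sup_add_finrank_inf_eq W U
  have h2 : finrank ℝ ↥(W ⊔ U) ≤ n := by
    have := Submodule.finrank_le (W ⊔ U)
    simpa [finrank_euclideanSpace] using this
  have h3 : 0 < finrank ℝ ↥(W ⊓ U) := by omega
  obtain ⟨⟨x, hx⟩, hx0⟩ := Module.finrank_pos_iff_exists_ne_zero.1 h3
  refine ⟨x, hx, fun h => hx0 ?_⟩
  simpa [Submodule.mk_eq_zero] using h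

lemma inner_self_pos' {x : EuclideanSpace ℝ (Fin n)} (hx : x ≠ 0) : 0 < ⟪x, x⟫ := by
  rw [real_inner_self_eq_norm_sq]
  exact pow_pos (norm_pos_iff.2 hx) 2

lemma sortedEigs_le_of_subspace {M : Matrix (Fin n) (Fin n) ℝ} (hM : M.IsHermitian) (k : Fin n)
    (c : ℝ) (W : Submodule ℝ (EuclideanSpace ℝ (Fin n)))
    (hdim : (k : ℕ) + 1 ≤ finrank ℝ W)
    (hq : ∀ x ∈ W, ⟪x, Matrix.toEuclideanLin M x⟫ ≤ c * ⟪x, x⟫) :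
    sortedEigs M k ≤ c := by
  classical
  set σ := Tuple.sort hM.eigenvalues with hσ
  set s : Finset (Fin n) := (Finset.Ici k).image ⇑σ with hs
  have hcard : s.card = n - (k : ℕ) := by
    rw [hs, Finset.card_image_of_injective _ σ.injective, Fin.card_Ici]
  set U := span ℝ (hM.eigenvectorBasis '' ↑s) with hU
  have hUrank : finrank ℝ U = n - (k : ℕ) := by rw [hU, finrank_span_eigenvectors, hcard]
  obtain ⟨x, hx, hx0⟩ := exists_ne_zero_mem_inf (W := W) (U := U)
    (by have := k.isLt; omega)
  have hlow : sortedEigs M k * ⟪x, x⟫ ≤ ⟪x, Matrix.toEuclideanLin M x⟫ := by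
    refine le_quad_on_span hM s ?_ hx.2
    intro j hj
    obtain ⟨i, hi, rfl⟩ := Finset.mem_image.1 hj
    have h2 : hM.eigenvalues (σ i) = sortedEigs M i := by rw [sortedEigs_eq hM]; rfl
    rw [h2]
    exact sortedEigs_mono hM (Finset.mem_Ici.1 hi)
  exact le_of_mul_le_mul_right (le_trans hlow (hq x hx.1)) (inner_self_pos' hx0)

lemma le_sortedEigs_of_subspace {M : Matrix (Fin n) (Fin n) ℝ} (hM : M.IsHermitian) (k : Fin n)
    (c : ℝ) (W : Submodule ℝ (EuclideanSpace ℝ (Fin n)))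
    (hdim : n ≤ finrank ℝ W + (k : ℕ))
    (hq : ∀ x ∈ W, c * ⟪x, x⟫ ≤ ⟪x, Matrix.toEuclideanLin M x⟫) :
    c ≤ sortedEigs M k := by
  classical
  set σ := Tuple.sort hM.eigenvalues with hσ
  set s : Finset (Fin n) := (Finset.Iic k).image ⇑σ with hs
  have hcard : s.card = (k : ℕ) + 1 := by
    rw [hs, Finset.card_image_of_injective _ σ.injective, Fin.card_Iic]
  set U := span ℝ (hM.eigenvectorBasis '' ↑s) with hU
  have hUrank : finrank ℝ U = (k : ℕ) + 1 := by rw [hU, finrank_span_eigenvectors, hcard]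
  obtain ⟨x, hx, hx0⟩ := exists_ne_zero_mem_inf (W := W) (U := U) (by omega)
  have hhigh : ⟪x, Matrix.toEuclideanLin M x⟫ ≤ sortedEigs M k * ⟪x, x⟫ := by
    refine quad_le_on_span hM s ?_ hx.2
    intro j hj
    obtain ⟨i, hi, rfl⟩ := Finset.mem_image.1 hj
    have h2 : hM.eigenvalues (σ i) = sortedEigs M i := by rw [sortedEigs_eq hM]; rfl
    rw [h2]
    exact sortedEigs_mono hM (Finset.mem_Iic.1 hi)
  exact le_of_mul_le_mul_right (le_trans (hq x hx.1) hhigh) (inner_self_pos' hx0)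

lemma span_univ_eigs {M : Matrix (Fin n) (Fin n) ℝ} (hM : M.IsHermitian) :
    span ℝ (hM.eigenvectorBasis '' ↑(Finset.univ : Finset (Fin n))) = ⊤ := by
  rw [Finset.coe_univ, Set.image_univ, ← hM.eigenvectorBasis.coe_toBasis]
  exact hM.eigenvectorBasis.toBasis.span_eq

lemma quad_le_max {M : Matrix (Fin n) (Fin n) ℝ} (hM : M.IsHermitian) (hn : 0 < n)
    (x : EuclideanSpace ℝ (Fin n)) :
    ⟪x, Matrix.toEuclideanLin M x⟫ ≤ sortedEigs M ⟨n - 1, by omega⟩ * ⟪x, x⟫ := by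
  refine quad_le_on_span hM Finset.univ ?_ (by rw [span_univ_eigs hM]; trivial)
  intro j _
  set σ := Tuple.sort hM.eigenvalues
  have h2 : hM.eigenvalues j = sortedEigs M (σ.symm j) := by
    rw [sortedEigs_eq hM]; simp [σ]
  rw [h2]
  exact sortedEigs_mono hM (by
    show ((σ.symm j : Fin n) : ℕ) ≤ n - 1
    have := (σ.symm j).isLt; omega)

lemma min_le_quad {M : Matrix (Fin n) (Fin n) ℝ} (hM : M.IsHermitian) (hn : 0 < n)
    (x : EuclideanSpace ℝ (Fin n)) :
    sortedEigs M ⟨0, hn⟩ * ⟪x, x⟫ ≤ ⟪x, Matrix.toEuclideanLin M x⟫ := by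
  refine le_quad_on_span hM Finset.univ ?_ (by rw [span_univ_eigs hM]; trivial)
  intro j _
  set σ := Tuple.sort hM.eigenvalues
  have h2 : hM.eigenvalues j = sortedEigs M (σ.symm j) := by
    rw [sortedEigs_eq hM]; simp [σ]
  rw [h2]
  exact sortedEigs_mono hM (by show (0 : ℕ) ≤ _; omega)

lemma toEuclideanLin_mul' (P Q : Matrix (Fin n) (Fin n) ℝ) (x : EuclideanSpace ℝ (Fin n)) :
    Matrix.toEuclideanLin (P * Q) x = Matrix.toEuclideanLin P (Matrix.toEuclideanLin Q x) := by
  rw [Matrix.toEuclideanLin_eq_toLin_orthonormal,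
    Matrix.toLin_mul _ (EuclideanSpace.basisFun (Fin n) ℝ).toBasis]
  rfl

/-- the linear equivalence induced by an invertible matrix -/
noncomputable def matEquiv {P : Matrix (Fin n) (Fin n) ℝ} (hP : IsUnit P) :
    EuclideanSpace ℝ (Fin n) ≃ₗ[ℝ] EuclideanSpace ℝ (Fin n) :=
  LinearEquiv.ofLinear (Matrix.toEuclideanLin P) (Matrix.toEuclideanLin P⁻¹)
    (by
      ext x
      rw [LinearMap.comp_apply, ← toEuclideanLin_mul',
        Matrix.mul_nonsing_inv _ (Matrix.isUnit_iff_isUnit_det _ |>.1 hP)]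
      simp [Matrix.toEuclideanLin_apply])
    (by
      ext x
      rw [LinearMap.comp_apply, ← toEuclideanLin_mul',
        Matrix.nonsing_inv_mul _ (Matrix.isUnit_iff_isUnit_det _ |>.1 hP)]
      simp [Matrix.toEuclideanLin_apply])

lemma matEquiv_apply {P : Matrix (Fin n) (Fin n) ℝ} (hP : IsUnit P)
    (x : EuclideanSpace ℝ (Fin n)) : matEquiv hP x = Matrix.toEuclideanLin P x := rfl

theorem ostrowski {n : ℕ} (A S : Matrix (Fin n) (Fin n) ℝ)
    (hA : A.IsHermitian) (hS : IsUnit S) (k : Fin n) :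
    ∃ θ : ℝ,
      sortedEigs (S * Sᵀ) ⟨0, k.pos⟩ ≤ θ ∧
      θ ≤ sortedEigs (S * Sᵀ) ⟨n - 1, Nat.sub_lt k.pos Nat.one_pos⟩ ∧
      sortedEigs (S * A * Sᵀ) k = θ * sortedEigs A k := by
  classical
  have hn : 0 < n := k.pos
  have hSt : IsUnit Sᵀ := by
    rw [Matrix.isUnit_iff_isUnit_det, Matrix.det_transpose]
    exact (Matrix.isUnit_iff_isUnit_det S).1 hS
  have hSS : (S * Sᵀ).IsHermitian := by
    have h := Matrix.isHermitian_mul_mul_conjTranspose S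
      (Matrix.isHermitian_one (n := Fin n) (α := ℝ))
    simpa [Matrix.conjTranspose_eq_transpose_of_trivial] using h
  have hSAS : (S * A * Sᵀ).IsHermitian := by
    have h := Matrix.isHermitian_mul_mul_conjTranspose S hA
    simpa [Matrix.conjTranspose_eq_transpose_of_trivial] using h
  set α := sortedEigs (S * Sᵀ) ⟨0, k.pos⟩ with hαdef
  set β := sortedEigs (S * Sᵀ) ⟨n - 1, Nat.sub_lt k.pos Nat.one_pos⟩ with hβdef
  set μ := sortedEigs A k with hμdef
  set ν := sortedEigs (S * A * Sᵀ) k with hνdef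
  have hαβ : α ≤ β := sortedEigs_mono hSS (by show (0 : ℕ) ≤ n - 1; omega)
  -- adjoint identities
  have hadj : ∀ (x z : EuclideanSpace ℝ (Fin n)),
      ⟪x, Matrix.toEuclideanLin S z⟫ = ⟪Matrix.toEuclideanLin Sᵀ x, z⟫ := by
    intro x z
    rw [show Sᵀ = Sᴴ from (Matrix.conjTranspose_eq_transpose_of_trivial S).symm,
      Matrix.toEuclideanLin_conjTranspose_eq_adjoint, LinearMap.adjoint_inner_left]
  have hquad : ∀ x : EuclideanSpace ℝ (Fin n),
      ⟪x, Matrix.toEuclideanLin (S * A * Sᵀ) x⟫ =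
        ⟪Matrix.toEuclideanLin Sᵀ x, Matrix.toEuclideanLin A (Matrix.toEuclideanLin Sᵀ x)⟫ := by
    intro x
    rw [mul_assoc, toEuclideanLin_mul' S (A * Sᵀ), hadj, toEuclideanLin_mul' A Sᵀ]
  have hyy : ∀ x : EuclideanSpace ℝ (Fin n),
      ⟪Matrix.toEuclideanLin Sᵀ x, Matrix.toEuclideanLin Sᵀ x⟫ =
        ⟪x, Matrix.toEuclideanLin (S * Sᵀ) x⟫ := by
    intro x
    rw [toEuclideanLin_mul' S Sᵀ, hadj]
  have hy_lb : ∀ x : EuclideanSpace ℝ (Fin n),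
      α * ⟪x, x⟫ ≤ ⟪Matrix.toEuclideanLin Sᵀ x, Matrix.toEuclideanLin Sᵀ x⟫ := by
    intro x; rw [hyy x]; exact min_le_quad hSS hn x
  have hy_ub : ∀ x : EuclideanSpace ℝ (Fin n),
      ⟪Matrix.toEuclideanLin Sᵀ x, Matrix.toEuclideanLin Sᵀ x⟫ ≤ β * ⟪x, x⟫ := by
    intro x; rw [hyy x]; exact quad_le_max hSS hn x
  -- subspaces
  set σA := Tuple.sort hA.eigenvalues with hσA
  have hWrank : ∀ U : Submodule ℝ (EuclideanSpace ℝ (Fin n)),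
      finrank ℝ (U.comap (matEquiv hSt : EuclideanSpace ℝ (Fin n) →ₗ[ℝ] _)) = finrank ℝ U := by
    intro U
    rw [Submodule.comap_equiv_eq_map_symm, LinearEquiv.finrank_map_eq]
  set sIic : Finset (Fin n) := (Finset.Iic k).image ⇑σA with hsIic
  set sIci : Finset (Fin n) := (Finset.Ici k).image ⇑σA with hsIci
  set UIic := span ℝ (hA.eigenvectorBasis '' ↑sIic) with hUIic
  set UIci := span ℝ (hA.eigenvectorBasis '' ↑sIci) with hUIci
  set WIic := UIic.comap (matEquiv hSt : EuclideanSpace ℝ (Fin n) →ₗ[ℝ] _) with hWIic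
  set WIci := UIci.comap (matEquiv hSt : EuclideanSpace ℝ (Fin n) →ₗ[ℝ] _) with hWIci
  have hWIic_rank : finrank ℝ WIic = (k : ℕ) + 1 := by
    rw [hWIic, hWrank, hUIic, finrank_span_eigenvectors, hsIic,
      Finset.card_image_of_injective _ σA.injective, Fin.card_Iic]
  have hWIci_rank : finrank ℝ WIci = n - (k : ℕ) := by
    rw [hWIci, hWrank, hUIci, finrank_span_eigenvectors, hsIci,
      Finset.card_image_of_injective _ σA.injective, Fin.card_Ici]
  have hmemIic : ∀ x ∈ WIic, Matrix.toEuclideanLin Sᵀ x ∈ UIic := fun x hx => hx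
  have hmemIci : ∀ x ∈ WIci, Matrix.toEuclideanLin Sᵀ x ∈ UIci := fun x hx => hx
  have hIic_bound : ∀ y ∈ UIic, ⟪y, Matrix.toEuclideanLin A y⟫ ≤ μ * ⟪y, y⟫ := by
    intro y hy
    refine quad_le_on_span hA sIic ?_ hy
    intro j hj
    obtain ⟨i, hi, rfl⟩ := Finset.mem_image.1 hj
    have h2 : hA.eigenvalues (σA i) = sortedEigs A i := by rw [sortedEigs_eq hA]; rfl
    rw [h2]
    exact sortedEigs_mono hA (Finset.mem_Iic.1 hi)
  have hIci_bound : ∀ y ∈ UIci, μ * ⟪y, y⟫ ≤ ⟪y, Matrix.toEuclideanLin A y⟫ := by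
    intro y hy
    refine le_quad_on_span hA sIci ?_ hy
    intro j hj
    obtain ⟨i, hi, rfl⟩ := Finset.mem_image.1 hj
    have h2 : hA.eigenvalues (σA i) = sortedEigs A i := by rw [sortedEigs_eq hA]; rfl
    rw [h2]
    exact sortedEigs_mono hA (Finset.mem_Ici.1 hi)
  -- the four inequalities
  have h1 : 0 ≤ μ → ν ≤ β * μ := by
    intro hμ
    refine sortedEigs_le_of_subspace hSAS k (β * μ) WIic (by omega) ?_
    intro x hx
    have e1 := hquad x
    have e2 := hIic_bound _ (hmemIic x hx)
    have e3 := mul_le_mul_of_nonneg_left (hy_ub x) hμ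
    rw [e1]
    calc ⟪Matrix.toEuclideanLin Sᵀ x, Matrix.toEuclideanLin A (Matrix.toEuclideanLin Sᵀ x)⟫
        ≤ μ * ⟪Matrix.toEuclideanLin Sᵀ x, Matrix.toEuclideanLin Sᵀ x⟫ := e2
      _ ≤ μ * (β * ⟪x, x⟫) := e3
      _ = β * μ * ⟪x, x⟫ := by ring
  have h2 : 0 ≤ μ → α * μ ≤ ν := by
    intro hμ
    refine le_sortedEigs_of_subspace hSAS k (α * μ) WIci (by have := k.isLt; omega) ?_
    intro x hx
    have e1 := hquad x
    have e2 := hIci_bound _ (hmemIci x hx)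
    have e3 := mul_le_mul_of_nonneg_left (hy_lb x) hμ
    rw [e1]
    calc α * μ * ⟪x, x⟫ = μ * (α * ⟪x, x⟫) := by ring
      _ ≤ μ * ⟪Matrix.toEuclideanLin Sᵀ x, Matrix.toEuclideanLin Sᵀ x⟫ := e3
      _ ≤ _ := e2
  have h3 : μ ≤ 0 → ν ≤ α * μ := by
    intro hμ
    refine sortedEigs_le_of_subspace hSAS k (α * μ) WIic (by omega) ?_
    intro x hx
    have e1 := hquad x
    have e2 := hIic_bound _ (hmemIic x hx)
    have e3 := mul_le_mul_of_nonpos_left (hy_lb x) hμ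
    rw [e1]
    calc ⟪Matrix.toEuclideanLin Sᵀ x, Matrix.toEuclideanLin A (Matrix.toEuclideanLin Sᵀ x)⟫
        ≤ μ * ⟪Matrix.toEuclideanLin Sᵀ x, Matrix.toEuclideanLin Sᵀ x⟫ := e2
      _ ≤ μ * (α * ⟪x, x⟫) := e3
      _ = α * μ * ⟪x, x⟫ := by ring
  have h4 : μ ≤ 0 → β * μ ≤ ν := by
    intro hμ
    refine le_sortedEigs_of_subspace hSAS k (β * μ) WIci (by have := k.isLt; omega) ?_
    intro x hx
    have e1 := hquad x
    have e2 := hIci_bound _ (hmemIci x hx)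
    have e3 := mul_le_mul_of_nonpos_left (hy_ub x) hμ
    rw [e1]
    calc β * μ * ⟪x, x⟫ = μ * (β * ⟪x, x⟫) := by ring
      _ ≤ μ * ⟪Matrix.toEuclideanLin Sᵀ x, Matrix.toEuclideanLin Sᵀ x⟫ := e3
      _ ≤ _ := e2
  -- conclusion
  rcases lt_trichotomy μ 0 with hμ | hμ | hμ
  · refine ⟨ν / μ, ?_, ?_, ?_⟩
    · exact (le_div_iff_of_neg hμ).2 (h3 hμ.le)
    · exact (div_le_iff_of_neg hμ).2 (h4 hμ.le)
    · rw [div_mul_cancel₀ _ hμ.ne]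
  · have hν1 := h1 hμ.ge
    have hν2 := h2 hμ.ge
    rw [hμ] at hν1 hν2
    refine ⟨α, le_refl _, hαβ, ?_⟩
    rw [hμ]
    nlinarith
  · refine ⟨ν / μ, ?_, ?_, ?_⟩
    · exact (le_div_iff₀ hμ).2 (h2 hμ.le)
    · exact (div_le_iff₀ hμ).2 (h1 hμ.le)
    · rw [div_mul_cancel₀ _ hμ.ne']
end

section
/- If a mapping f : [0, ∞) → [0, ∞) is monotonically increasing, scalable (for all α > 1 and x ≥ 0, α f(x) > f(αx)), and there exists x₀ ≥ 0 with x₀ ≥ f(x₀), then f has a unique fixed point in [0, ∞). -/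
open Set Function

/-- The least pre-fixed point above `a` is a fixed point. -/
theorem exists_isFixedPt_of_monotoneOn_of_mapsTo {α : Type*} [ConditionallyCompleteLattice α]
    {f : α → α} {a x₀ : α} (hmono : MonotoneOn f (Ici a)) (hmaps : MapsTo f (Ici a) (Ici a))
    (hx₀ : a ≤ x₀) (hfx₀ : f x₀ ≤ x₀) : ∃ c, a ≤ c ∧ IsFixedPt f c := by
  set S := {x | a ≤ x ∧ f x ≤ x}
  have hne : S.Nonempty := ⟨x₀, hx₀, hfx₀⟩
  have hbdd : BddBelow S := ⟨a, fun x hx => hx.1⟩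
  have hac : a ≤ sInf S := le_csInf hne fun x hx => hx.1
  have hfc : f (sInf S) ≤ sInf S :=
    le_csInf hne fun x hx => (hmono hac hx.1 (csInf_le hbdd hx)).trans hx.2
  have hcf : sInf S ≤ f (sInf S) := csInf_le hbdd ⟨hmaps hac, hmono (hmaps hac) hac hfc⟩
  exact ⟨sInf S, hac, le_antisymm hfc hcf⟩

section Scalable

variable {𝕜 : Type*} [Field 𝕜] [LinearOrder 𝕜] [IsStrictOrderedRing 𝕜] {f : 𝕜 → 𝕜}

theorem apply_zero_pos_of_scalable (hscal : ∀ α x : 𝕜, 1 < α → 0 ≤ x → f (α * x) < α * f x) :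
    0 < f 0 := by
  have h := hscal 2 0 one_lt_two le_rfl
  rw [mul_zero] at h
  linarith

/-- Scaling a positive fixed point `y` by `z / y > 1` would give `f z < z`. -/
theorem IsFixedPt.le_of_scalable (hscal : ∀ α x : 𝕜, 1 < α → 0 ≤ x → f (α * x) < α * f x)
    {y z : 𝕜} (hy : 0 < y) (hfy : IsFixedPt f y) (hfz : IsFixedPt f z) : z ≤ y := by
  by_contra! hyz
  have h := hscal (z / y) y ((one_lt_div hy).mpr hyz) hy.le
  rw [div_mul_cancel₀ z hy.ne', hfz, hfy, div_mul_cancel₀ z hy.ne'] at h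
  exact h.false

end Scalable

theorem standard_function_unique_fixed_point_general (f : ℝ → ℝ)
    (hmono : ∀ x x' : ℝ, 0 ≤ x' → x' ≤ x → f x' ≤ f x)
    (hscal : ∀ α x : ℝ, 1 < α → 0 ≤ x → f (α * x) < α * f x)
    (hex : ∃ x₀ : ℝ, 0 ≤ x₀ ∧ f x₀ ≤ x₀) :
    ∃! x : ℝ, 0 ≤ x ∧ f x = x := by
  have hpos : ∀ x, 0 ≤ x → 0 < f x := fun x hx =>
    (apply_zero_pos_of_scalable hscal).trans_le (hmono x 0 le_rfl hx)
  obtain ⟨x₀, hx₀, hfx₀⟩ := hex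
  obtain ⟨c, hc, hfc⟩ := exists_isFixedPt_of_monotoneOn_of_mapsTo
    (fun x' hx' x _ hle => hmono x x' hx' hle) (fun x hx => (hpos x hx).le) hx₀ hfx₀
  refine ⟨c, ⟨hc, hfc⟩, fun y ⟨hy, hfy⟩ => le_antisymm ?_ ?_⟩
  · exact IsFixedPt.le_of_scalable hscal (hfc ▸ hpos c hc) hfc hfy
  · exact IsFixedPt.le_of_scalable hscal (hfy ▸ hpos y hy) hfy hfc

theorem standard_function_unique_fixed_point (f : ℝ → ℝ)
    (hmap : ∀ x : ℝ, 0 ≤ x → 0 ≤ f x)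
    (hmono : ∀ x x' : ℝ, 0 ≤ x' → x' ≤ x → f x' ≤ f x)
    (hscal : ∀ α x : ℝ, 1 < α → 0 ≤ x → f (α * x) < α * f x)
    (hex : ∃ x₀ : ℝ, 0 ≤ x₀ ∧ f x₀ ≤ x₀) :
    ∃! x : ℝ, 0 ≤ x ∧ f x = x :=
  standard_function_unique_fixed_point_general f hmono hscal hex
end
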